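/- Let n ≥ 2. With notation as in the classification of virtual line elements, the set P of virtual line elements forms a group under multiplication in A, and the map (ℤ/nℤ)^n × ℂ^n → P sending (f_0,...,f_{n-1}; β^0,...,β^{n-1}) to 1 + Σ_{q=0}^{n-1} Σ_{l=1}^{n-1} (ζ^{l f_q} - 1) u_l^q + Σ_{q=0}^{n-1} β^q u_0^q is a group isomorphism, where the group structure on the source is componentwise addition. -/

import Mathlib

/-!
Write elements of `A` as `c • 1 + ∑ d_p • u_p`. The `u_l^q` with `l ≠ 0` are orthogonal
idempotents and the `u_0^q` span a square-zero ideal, so for `L = 1 + ∑ d_p • u_p` the power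
`L ^ k` has coefficient `(1 + d_p) ^ k - 1` at `l ≠ 0` and `k d_p` at `l = 0`, while `ψ^k L` has
coefficient `k d_p` at `l = 0` and moves the coefficient at `(k l mod n, q)` to `(l, q)`. Hence
the `u_0`-part of a virtual line element is free, and `x_l := 1 + d_{l,q}` satisfies
`x_l ^ k = x_{kl}` (with `x_0 = 1`): so `x_1` is an `n`-th root of unity `ζ ^ f` and
`x_l = ζ ^ (l f)`. The constant coefficient of a unit is nonzero, and `L ^ 2 = ψ^2 L` forces it to
be `1`. Multiplicativity of `Φ` is `ζ ^ (l (f + g)) = ζ ^ (l f) ζ ^ (l g)`.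
-/

open Finset Function

section LinComb

variable {ι A : Type*} [Fintype ι] [CommRing A] [Algebra ℂ A]

def linComb (e : ι → A) (c : ℂ) (d : ι → ℂ) : A := algebraMap ℂ A c + ∑ i, d i • e i

theorem linComb_one_zero (e : ι → A) : linComb e 1 0 = 1 := by
  simp [linComb]

variable {e : ι → A}

theorem linComb_eq_sum_option (c : ℂ) (d : ι → ℂ) :
    linComb e c d = ∑ o : Option ι, o.elim c d • o.elim 1 e := by
  simp [linComb, Fintype.sum_option, Algebra.algebraMap_eq_smul_one]

theorem linComb_inj (hind : LinearIndependent ℂ fun o : Option ι => o.elim 1 e)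
    {c c' : ℂ} {d d' : ι → ℂ} : linComb e c d = linComb e c' d' ↔ c = c' ∧ d = d' := by
  refine ⟨fun h => ?_, fun h => by rw [h.1, h.2]⟩
  rw [linComb_eq_sum_option, linComb_eq_sum_option] at h
  have hcoeff := Fintype.linearIndependent_iffₛ.1 hind _ _ h
  exact ⟨hcoeff none, funext fun i => hcoeff (some i)⟩

theorem exists_linComb_eq
    (hspan : ⊤ ≤ Submodule.span ℂ (Set.range fun o : Option ι => o.elim 1 e)) (x : A) :
    ∃ c d, linComb e c d = x := by
  obtain ⟨g, hg⟩ :=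
    (Submodule.mem_span_range_iff_exists_fun ℂ).1 (hspan (Submodule.mem_top : x ∈ ⊤))
  refine ⟨g none, fun i => g (some i), ?_⟩
  rw [linComb_eq_sum_option, ← hg]
  exact sum_congr rfl fun o _ => by cases o <;> rfl

variable [DecidableEq ι] {S : ι → Prop} [DecidablePred S]

theorem linComb_mul (he : ∀ i j, e i * e j = if i = j ∧ S i then e i else 0)
    (c c' : ℂ) (d d' : ι → ℂ) :
    linComb e c d * linComb e c' d' =
      linComb e (c * c') fun i => c * d' i + c' * d i + if S i then d i * d' i else 0 := by
  have hsq : (∑ i, d i • e i) * ∑ j, d' j • e j =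
      ∑ i, (if S i then d i * d' i else 0) • e i := by
    simp_rw [sum_mul_sum, smul_mul_smul_comm, he, ite_and, smul_ite, smul_zero, sum_ite_eq,
      mem_univ, if_true, ite_smul, zero_smul]
  rw [linComb, linComb, add_mul, mul_add, mul_add, hsq]
  simp only [linComb, mul_sum, sum_mul, Algebra.algebraMap_eq_smul_one,
    smul_mul_smul_comm, one_mul, mul_one, add_smul, sum_add_distrib]
  simp only [mul_comm (d _) c']
  abel

theorem linComb_one_pow (he : ∀ i j, e i * e j = if i = j ∧ S i then e i else 0)
    (d : ι → ℂ) (k : ℕ) :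
    linComb e 1 d ^ k = linComb e 1 fun i => if S i then (1 + d i) ^ k - 1 else k * d i := by
  induction k with
  | zero => simp [linComb]
  | succ k ih =>
    rw [pow_succ, ih, linComb_mul he, one_mul]
    congr 1
    funext i
    split_ifs
    · ring
    · push_cast; ring

theorem ne_zero_of_isUnit_linComb (he : ∀ i j, e i * e j = if i = j ∧ S i then e i else 0)
    (hind : LinearIndependent ℂ fun o : Option ι => o.elim 1 e)
    (hspan : ⊤ ≤ Submodule.span ℂ (Set.range fun o : Option ι => o.elim 1 e))
    {c : ℂ} {d : ι → ℂ} (h : IsUnit (linComb e c d)) : c ≠ 0 := by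
  obtain ⟨y, hy⟩ := h.exists_right_inv
  obtain ⟨c', d', rfl⟩ := exists_linComb_eq hspan y
  rw [linComb_mul he, ← linComb_one_zero e, linComb_inj hind] at hy
  exact left_ne_zero_of_mul_eq_one hy.1

theorem map_linComb (T : A →ₗ[ℂ] A) (a : ℂ) (φ : ι → ι) (hφ : ∀ i, S (φ i) → S i)
    (hT1 : T 1 = 1) (hT0 : ∀ i, ¬ S i → T (e i) = a • e i)
    (hTS : ∀ i, S i → T (e i) = ∑ j with φ j = i, e j) (c : ℂ) (d : ι → ℂ) :
    T (linComb e c d) =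
      linComb e c fun j => if S j then (if S (φ j) then d (φ j) else 0) else a * d j := by
  have hsum : ∑ i, d i • T (e i) =
      ∑ i, (if S i then 0 else a * d i) • e i +
        ∑ i, ∑ j with φ j = i, (if S i then d i else 0) • e j := by
    rw [← sum_add_distrib]
    refine sum_congr rfl fun i _ => ?_
    by_cases hi : S i
    · simp [hi, hTS i hi, smul_sum]
    · simp [hi, hT0 i hi, smul_smul, mul_comm]
  have hfiber : ∑ i, ∑ j with φ j = i, (if S i then d i else 0) • e j =
      ∑ j, (if S (φ j) then d (φ j) else 0) • e j := by
    rw [← sum_fiberwise univ φ fun j => (if S (φ j) then d (φ j) else 0) • e j]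
    exact sum_congr rfl fun i _ => sum_congr rfl fun j hj => by rw [(mem_filter.1 hj).2]
  rw [linComb, linComb, map_add, Algebra.algebraMap_eq_smul_one, map_smul, hT1, map_sum]
  simp only [map_smul, hsum, hfiber, ← sum_add_distrib, ← add_smul]
  congr 2 with j
  by_cases hj : S j
  · simp [hj]
  · simp [hj, mt (hφ j) hj]

theorem linComb_one_pow_eq_iff (he : ∀ i j, e i * e j = if i = j ∧ S i then e i else 0)
    (hind : LinearIndependent ℂ fun o : Option ι => o.elim 1 e) (d d' : ι → ℂ) (k : ℕ) :
    linComb e 1 d ^ k = linComb e 1 (fun i => if S i then d' i else k * d i) ↔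
      ∀ i, S i → (1 + d i) ^ k - 1 = d' i := by
  rw [linComb_one_pow he, linComb_inj hind, funext_iff]
  refine ⟨fun h i hi => by simpa [hi] using h.2 i, fun h => ⟨rfl, fun i => ?_⟩⟩
  by_cases hi : S i <;> simp [hi, h]

theorem eq_one_of_isUnit_of_sq_eq (he : ∀ i j, e i * e j = if i = j ∧ S i then e i else 0)
    (hind : LinearIndependent ℂ fun o : Option ι => o.elim 1 e)
    (hspan : ⊤ ≤ Submodule.span ℂ (Set.range fun o : Option ι => o.elim 1 e))
    {c : ℂ} {d d' : ι → ℂ} (hu : IsUnit (linComb e c d))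
    (h : linComb e c d ^ 2 = linComb e c d') : c = 1 := by
  rw [sq, linComb_mul he, linComb_inj hind] at h
  exact mul_left_cancel₀ (ne_zero_of_isUnit_linComb he hind hspan hu) (h.1.trans (mul_one c).symm)

end LinComb

section FinIndex

variable {n : ℕ} [NeZero n] {A : Type*} [CommRing A] {u : Fin n → Fin n → A}

theorem uncurry_mul_uncurry
    (hmul : ∀ l q l' q' : Fin n, (l.1 ≠ 0 ∨ l'.1 ≠ 0) →
      u l q * u l' q' = if l = l' ∧ q = q' then u l q else 0)
    (h0 : ∀ q q' : Fin n, u 0 q * u 0 q' = 0) (p p' : Fin n × Fin n) :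
    uncurry u p * uncurry u p' = if p = p' ∧ p.1.val ≠ 0 then uncurry u p else 0 := by
  obtain ⟨l, q⟩ := p
  obtain ⟨l', q'⟩ := p'
  by_cases hl : l.val = 0 ∧ l'.val = 0
  · obtain ⟨rfl, rfl⟩ : l = 0 ∧ l' = 0 := ⟨Fin.ext hl.1, Fin.ext hl.2⟩
    simpa using h0 q q'
  · rw [uncurry_apply_pair, uncurry_apply_pair, hmul l q l' q' (by tauto)]
    by_cases h : l = l' ∧ q = q'
    · obtain ⟨rfl, rfl⟩ := h
      simp_all
    · rw [if_neg h, if_neg fun h' => h (Prod.mk.inj h'.1)]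

variable [Algebra ℂ A]

theorem linComb_uncurry (c : ℂ) (d : Fin n × Fin n → ℂ) :
    linComb (uncurry u) c d = algebraMap ℂ A c +
      (∑ q, ∑ l with l.1 ≠ 0, d (l, q) • u l q) + ∑ q, d (0, q) • u 0 q := by
  rw [linComb, Fintype.sum_prod_type_right, add_assoc, ← sum_add_distrib]
  congr 1
  refine sum_congr rfl fun q _ => ?_
  rw [← sum_filter_add_sum_filter_not univ (fun l : Fin n => l.1 ≠ 0)]
  congr 1
  simp [Fin.val_eq_zero_iff, filter_eq']

theorem map_linComb_uncurry (T : A →ₗ[ℂ] A) (k : ℕ) (hT1 : T 1 = 1)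
    (hT0 : ∀ q, T (u 0 q) = (k : ℂ) • u 0 q)
    (hTl : ∀ l q : Fin n, l.1 ≠ 0 → T (u l q) = ∑ s with k * s.1 % n = l.1, u s q)
    (c : ℂ) (d : Fin n × Fin n → ℂ) :
    T (linComb (uncurry u) c d) = linComb (uncurry u) c fun p =>
      if p.1.val ≠ 0 then
        (if (Fin.ofNat n (k * p.1)).val ≠ 0 then d (Fin.ofNat n (k * p.1), p.2) else 0)
      else k * d p := by
  refine map_linComb T k (fun p => (Fin.ofNat n (k * p.1), p.2)) (fun p => ?_) hT1
    (fun p hp => ?_) (fun p hp => ?_) c d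
  · intro h hp
    simp [hp] at h
  · obtain ⟨l, q⟩ := p
    obtain rfl : l = 0 := Fin.ext (not_not.1 hp)
    exact hT0 q
  · obtain ⟨l, q⟩ := p
    rw [uncurry_apply_pair, hTl l q hp, sum_filter, sum_filter, Fintype.sum_prod_type]
    simp only [Prod.mk.injEq, ite_and, sum_ite_irrel, uncurry_apply_pair, sum_ite_eq', mem_univ,
      if_true, sum_const_zero, Fin.ext_iff (a := Fin.ofNat _ _), Fin.val_ofNat]

/-- The equation `L ^ k = ψ^k L` for `L = 1 + ∑ d_p • u_p`, read off on the coefficients of the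
idempotents `u_l^q`, `l ≠ 0` (it holds automatically on those of the `u_0^q`). -/
def PowEqPsiCoeff (k : ℕ) (d : Fin n × Fin n → ℂ) : Prop :=
  ∀ p : Fin n × Fin n, p.1.val ≠ 0 →
    (1 + d p) ^ k - 1 =
      if (Fin.ofNat n (k * p.1)).val ≠ 0 then d (Fin.ofNat n (k * p.1), p.2) else 0

variable {ζ : ℂ}

def lineCoeff (ζ : ℂ) (fb : (Fin n → ZMod n) × (Fin n → ℂ)) (p : Fin n × Fin n) : ℂ :=
  if p.1.val = 0 then fb.2 p.2 else ζ ^ (p.1.val * (fb.1 p.2).val) - 1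

theorem linComb_one_lineCoeff (fb : (Fin n → ZMod n) × (Fin n → ℂ)) :
    linComb (uncurry u) 1 (lineCoeff ζ fb) =
      1 + (∑ q, ∑ l with l.1 ≠ 0, (ζ ^ (l.1 * (fb.1 q).val) - 1) • u l q) +
        ∑ q, fb.2 q • u 0 q := by
  rw [linComb_uncurry, map_one]
  congr 3 with q
  exact sum_congr rfl fun l hl => by simp [lineCoeff, (mem_filter.1 hl).2]

theorem lineCoeff_zero : lineCoeff ζ (0 : (Fin n → ZMod n) × (Fin n → ℂ)) = 0 := by
  funext p
  simp [lineCoeff]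

theorem lineCoeff_add (hζ : ζ ^ n = 1) (x y : (Fin n → ZMod n) × (Fin n → ℂ))
    (p : Fin n × Fin n) :
    lineCoeff ζ (x + y) p = lineCoeff ζ y p + lineCoeff ζ x p +
      if p.1.val ≠ 0 then lineCoeff ζ x p * lineCoeff ζ y p else 0 := by
  by_cases hp : p.1.val = 0
  · simp [lineCoeff, hp, add_comm]
  have hchar : ζ ^ (p.1.val * (x.1 p.2 + y.1 p.2).val) =
      ζ ^ (p.1.val * (x.1 p.2).val) * ζ ^ (p.1.val * (y.1 p.2).val) := by
    rw [← pow_add, ← mul_add, ZMod.val_add]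
    exact pow_eq_pow_of_modEq ((Nat.mod_modEq _ n).mul_left _) hζ
  simp only [lineCoeff, hp, if_false, ne_eq, not_false_eq_true, if_true, Prod.fst_add,
    Pi.add_apply, hchar]
  ring

theorem lineCoeff_injective (hζ : IsPrimitiveRoot ζ n) (hn : 1 < n) :
    Injective (lineCoeff (n := n) ζ) := by
  intro x y h
  refine Prod.ext (funext fun q => ?_) (funext fun q => ?_)
  · have h1 := congrFun h (⟨1, hn⟩, q)
    simp only [lineCoeff, one_ne_zero, if_false, one_mul, sub_left_inj] at h1
    exact ZMod.val_injective n (hζ.pow_inj (ZMod.val_lt _) (ZMod.val_lt _) h1)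
  · simpa [lineCoeff] using congrFun h (0, q)

theorem pow_pow_val_mul (hζ : ζ ^ n = 1) (k : ℕ) (l : Fin n) (f : ZMod n) :
    (ζ ^ (l.val * f.val)) ^ k = ζ ^ ((Fin.ofNat n (k * l)).val * f.val) := by
  rw [← pow_mul, Fin.val_ofNat]
  refine pow_eq_pow_of_modEq ?_ hζ
  rw [show l.val * f.val * k = k * l.val * f.val by ring]
  exact ((Nat.mod_modEq _ n).mul_right _).symm

theorem exists_lineCoeff_eq_iff (hζ : IsPrimitiveRoot ζ n) (hn : 1 < n)
    (d : Fin n × Fin n → ℂ) :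
    (∃ fb, lineCoeff ζ fb = d) ↔ ∀ k, 1 ≤ k → PowEqPsiCoeff k d := by
  constructor
  · rintro ⟨fb, rfl⟩ k - p hp
    rw [lineCoeff, if_neg hp, add_sub_cancel, pow_pow_val_mul hζ.pow_eq_one]
    split_ifs with h
    · simp only [lineCoeff, if_neg h]
    · rw [not_not.1 h, zero_mul, pow_zero, sub_self]
  · intro hd
    let one : Fin n := ⟨1, hn⟩
    have hroot : ∀ q, (1 + d (one, q)) ^ n = 1 := fun q => by
      simpa [sub_eq_zero, one] using hd n (by omega) (one, q) one_ne_zero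
    choose m hm hζm using fun q => hζ.eq_pow_of_pow_eq_one (hroot q)
    refine ⟨(fun q => (m q : ZMod n), fun q => d (0, q)), funext fun ⟨l, q⟩ => ?_⟩
    by_cases hl : l.val = 0
    · obtain rfl : l = 0 := Fin.ext hl
      simp [lineCoeff]
    have hlq := hd l.val (Nat.one_le_iff_ne_zero.2 hl) (one, q) one_ne_zero
    have hl' : Fin.ofNat n (l.val * one.val) = l := by ext; simp [one]
    rw [hl', if_pos hl, ← hζm, ← pow_mul] at hlq
    simpa [lineCoeff, hl, ZMod.val_natCast_of_lt (hm q), mul_comm] using hlq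

end FinIndex

theorem stmt13 (n : ℕ) (hn : 2 ≤ n) (ζ : ℂ)
    (hζ : ζ = Complex.exp (2 * Real.pi * Complex.I / n))
    (A : Type*) [CommRing A] [Algebra ℂ A]
    (u : Fin n → Fin n → A)
    (hmul : ∀ (l q l' q' : Fin n), (l.1 ≠ 0 ∨ l'.1 ≠ 0) →
      u l q * u l' q' = if l = l' ∧ q = q' then u l q else 0)
    (h0 : ∀ q q' : Fin n, u ⟨0, by omega⟩ q * u ⟨0, by omega⟩ q' = 0)
    (hind : LinearIndependent ℂ
      (fun p : Option (Fin n × Fin n) => p.elim (1 : A) (fun lq => u lq.1 lq.2)))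
    (hspan : ⊤ ≤ Submodule.span ℂ
      (Set.range (fun p : Option (Fin n × Fin n) => p.elim (1 : A) (fun lq => u lq.1 lq.2))))
    (ψ : ℕ → (A →ₗ[ℂ] A))
    (hψ1 : ∀ k, ψ k 1 = 1)
    (hψ0 : ∀ k, ∀ q : Fin n, ψ k (u ⟨0, by omega⟩ q) = (k : ℂ) • u ⟨0, by omega⟩ q)
    (hψl : ∀ k, ∀ l q : Fin n, l.1 ≠ 0 →
      ψ k (u l q) = ∑ s ∈ Finset.univ.filter (fun s : Fin n => k * s.1 % n = l.1), u s q)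
    (Φ : (Fin n → ZMod n) × (Fin n → ℂ) → A)
    (hΦ : ∀ fb : (Fin n → ZMod n) × (Fin n → ℂ),
      Φ fb = 1 + (∑ q : Fin n, ∑ l ∈ Finset.univ.filter (fun l : Fin n => l.1 ≠ 0),
          (ζ ^ (l.1 * (fb.1 q).val) - 1) • u l q) +
        ∑ q : Fin n, fb.2 q • u ⟨0, by omega⟩ q) :
    (∀ x y, Φ (x + y) = Φ x * Φ y) ∧ Function.Injective Φ ∧
      Set.range Φ = {L : A | IsUnit L ∧ ∀ k : ℕ, 1 ≤ k → L ^ k = ψ k L} := by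
  have : NeZero n := ⟨by omega⟩
  have hprim : IsPrimitiveRoot ζ n := hζ ▸ Complex.isPrimitiveRoot_exp n (NeZero.ne n)
  have he := uncurry_mul_uncurry hmul h0
  replace hind : LinearIndependent ℂ fun o => Option.elim o 1 (uncurry u) := hind
  replace hspan : ⊤ ≤ Submodule.span ℂ (Set.range fun o => Option.elim o 1 (uncurry u)) :=
    hspan
  have hψ c d k := map_linComb_uncurry (ψ k) k (hψ1 k) (hψ0 k) (hψl k) c d
  have hΦ' (fb) : Φ fb = linComb (uncurry u) 1 (lineCoeff ζ fb) :=
    (hΦ fb).trans (linComb_one_lineCoeff fb).symm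
  have hpow (k d) :
      linComb (uncurry u) 1 d ^ k = ψ k (linComb (uncurry u) 1 d) ↔ PowEqPsiCoeff k d := by
    rw [hψ, linComb_one_pow_eq_iff he hind, PowEqPsiCoeff]
  have hmulΦ (x y) : Φ (x + y) = Φ x * Φ y := by
    rw [hΦ', hΦ', hΦ', linComb_mul he, one_mul]
    congr with p
    simp only [one_mul, lineCoeff_add hprim.pow_eq_one]
  refine ⟨hmulΦ, fun x y h => ?_, ?_⟩
  · rw [hΦ', hΦ', linComb_inj hind] at h
    exact lineCoeff_injective hprim hn h.2
  ext L
  constructor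
  · rintro ⟨fb, rfl⟩
    refine ⟨IsUnit.of_mul_eq_one (Φ (-fb)) ?_, fun k hk => ?_⟩
    · rw [← hmulΦ, add_neg_cancel, hΦ', lineCoeff_zero, linComb_one_zero]
    · rw [hΦ', hpow]
      exact (exists_lineCoeff_eq_iff hprim hn _).1 ⟨fb, rfl⟩ k hk
  · rintro ⟨hunit, hL⟩
    obtain ⟨c, d, rfl⟩ := exists_linComb_eq hspan L
    obtain rfl : c = 1 :=
      eq_one_of_isUnit_of_sq_eq he hind hspan hunit ((hL 2 one_le_two).trans (hψ c d 2))
    obtain ⟨fb, rfl⟩ :=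
      (exists_lineCoeff_eq_iff hprim hn d).2 fun k hk => (hpow k d).1 (hL k hk)
    exact ⟨fb, hΦ' fb⟩
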